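/- arXiv:2509.25901 — 2 statements merged into one kernel-verified Lean document; each statement's English description precedes it below -/
import Mathlib

section
/- Let q > 3 be a power of 2 and L = PSL(2,q), X its class of involutions. Then the automorphism group of the commuting involution graph C(L,X) is isomorphic to the wreath product Sym(q-1) wr Sym(q+1). -/
open Matrix
open scoped MatrixGroups

def commGraph (G : Type*) [Group G] : SimpleGraph {x : G // x * x = 1 ∧ x ≠ 1} where
  Adj x y := x ≠ y ∧ (x : G) * y = (y : G) * x
  symm := ⟨fun x y h => ⟨h.1.symm, h.2.symm⟩⟩
  loopless := ⟨fun x h => h.1 rfl⟩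

def graphAut {V : Type*} (G : SimpleGraph V) : Subgroup (Equiv.Perm V) where
  carrier := {e | ∀ x y, G.Adj (e x) (e y) ↔ G.Adj x y}
  one_mem' := by intro x y; simp
  mul_mem' := by
    intro a b ha hb x y
    simp only [Equiv.Perm.mul_apply]
    exact (ha _ _).trans (hb x y)
  inv_mem' := by
    intro a ha x y
    simpa using (ha (a⁻¹ x) (a⁻¹ y)).symm

def reindexAut (a b : ℕ) : Equiv.Perm (Fin b) →* MulAut (Fin b → Equiv.Perm (Fin a)) where
  toFun σ :=
    { toFun := fun f => f ∘ σ.symm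
      invFun := fun f => f ∘ σ
      left_inv := fun f => by ext i : 1; simp
      right_inv := fun f => by ext i : 1; simp
      map_mul' := fun f g => rfl }
  map_one' := rfl
  map_mul' := fun σ τ => rfl

def WreathSym (a b : ℕ) : Type :=
  (Fin b → Equiv.Perm (Fin a)) ⋊[reindexAut a b] Equiv.Perm (Fin b)

instance (a b : ℕ) : Group (WreathSym a b) :=
  inferInstanceAs (Group ((Fin b → Equiv.Perm (Fin a)) ⋊[reindexAut a b] Equiv.Perm (Fin b)))

/-!
For even `q` the centre of `SL(2, q)` is trivial, so `PSL(2, q) = SL(2, q)`. An involution of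
`SL(2, q)` has the form `!![a, b; c, a]` with `a ^ 2 = 1 + b * c`; squaring is bijective in
characteristic `2`, so the involutions correspond exactly to the pairs `(b, c) ≠ 0`. Two of them
commute iff their pairs are proportional, hence `C(L, X)` is the disjoint union, over the `q + 1`
points of the projective line, of cliques on the `q - 1` nonzero vectors on each line. An
automorphism of such a union of cliques permutes the cliques and then acts independently inside
each of them, which is the wreath product `Sym(q - 1) ≀ Sym(q + 1)`.
-/

open scoped LinearAlgebra.Projectivization

namespace SimpleGraph

variable {V I P : Type*}

/- `⊥ □ ⊤` on `I × P` models the disjoint union of `|I|` copies of the complete graph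
on `P`. -/
lemma bot_boxProd_top_adj {x y : I × P} :
    ((⊥ : SimpleGraph I) □ (⊤ : SimpleGraph P)).Adj x y ↔ x ≠ y ∧ x.1 = y.1 := by
  obtain ⟨i, p⟩ := x
  obtain ⟨j, r⟩ := y
  simp only [boxProd_adj, bot_adj, top_adj, ne_eq, Prod.mk.injEq]
  tauto

def Iso.toBotBoxProdTop {G : SimpleGraph V} (e : V ≃ I × P)
    (h : ∀ x y, G.Adj x y ↔ x ≠ y ∧ (e x).1 = (e y).1) :
    G ≃g (⊥ : SimpleGraph I) □ (⊤ : SimpleGraph P) :=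
  ⟨e, by intro x y; rw [bot_boxProd_top_adj, h, ne_eq, ne_eq, e.apply_eq_iff_eq]⟩

def Iso.botBoxProdTopCongr {I J P Q : Type*} (e₁ : I ≃ J) (e₂ : P ≃ Q) :
    ((⊥ : SimpleGraph I) □ (⊤ : SimpleGraph P)) ≃g
      ((⊥ : SimpleGraph J) □ (⊤ : SimpleGraph Q)) :=
  Iso.toBotBoxProdTop (e₁.prodCongr e₂) fun x y => by
    rw [bot_boxProd_top_adj, Equiv.prodCongr_apply, Prod.map_fst, Prod.map_fst,
      e₁.apply_eq_iff_eq]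

section GraphAut

variable {e : Equiv.Perm (I × P)}

lemma fst_apply_eq_fst_apply_iff_of_mem_graphAut
    (he : e ∈ graphAut ((⊥ : SimpleGraph I) □ (⊤ : SimpleGraph P))) (x y : I × P) :
    (e x).1 = (e y).1 ↔ x.1 = y.1 := by
  by_cases hxy : x = y
  · simp [hxy]
  · have h := he x y
    rw [bot_boxProd_top_adj, bot_boxProd_top_adj] at h
    simpa only [ne_eq, EmbeddingLike.apply_eq_iff_eq, hxy, not_false_eq_true, true_and] using h

lemma exists_eq_prodMap_of_mem_graphAut [Finite I] [Finite P] (p₀ : P)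
    (he : e ∈ graphAut ((⊥ : SimpleGraph I) □ (⊤ : SimpleGraph P))) :
    ∃ (σ : Equiv.Perm I) (τ : I → Equiv.Perm P), ∀ x, e x = (σ x.1, τ x.1 x.2) := by
  have hfst := fst_apply_eq_fst_apply_iff_of_mem_graphAut he
  have hσ : Function.Injective fun i => (e (i, p₀)).1 := fun i j h => (hfst _ _).1 h
  have hτ (i : I) : Function.Injective fun p => (e (i, p)).2 := fun p r h => by
    simpa using e.injective (Prod.ext ((hfst (i, p) (i, r)).2 rfl) h)
  refine ⟨.ofBijective _ hσ.bijective_of_finite,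
    fun i => .ofBijective _ (hτ i).bijective_of_finite, fun x => Prod.ext ?_ rfl⟩
  exact (hfst _ _).2 rfl

end GraphAut

end SimpleGraph

def graphAutCongr {V W : Type*} {G : SimpleGraph V} {H : SimpleGraph W} (e : G ≃g H) :
    graphAut G ≃* graphAut H where
  toFun a := ⟨e.toEquiv.permCongr a, fun _ _ =>
    e.map_adj_iff.trans ((a.2 _ _).trans e.symm.map_adj_iff)⟩
  invFun a := ⟨e.toEquiv.permCongr.symm a, fun _ _ =>
    e.symm.map_adj_iff.trans ((a.2 _ _).trans e.map_adj_iff)⟩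
  left_inv a := Subtype.ext (e.toEquiv.permCongr.symm_apply_apply a)
  right_inv a := Subtype.ext (e.toEquiv.permCongr.apply_symm_apply a)
  map_mul' a b := Subtype.ext (e.toEquiv.permCongr_mul a b)

def commGraphCongr {G H : Type*} [Group G] [Group H] (e : G ≃* H) :
    commGraph G ≃g commGraph H where
  toEquiv := e.toEquiv.subtypeEquiv fun x => by
    simp [← map_mul, e.injective.eq_iff', map_eq_one_iff e e.injective]
  map_rel_iff' {x y} := by
    simp [commGraph, ← map_mul, e.injective.eq_iff, Subtype.ext_iff]

lemma reindexAut_apply {a b : ℕ} (σ : Equiv.Perm (Fin b)) (f : Fin b → Equiv.Perm (Fin a)) :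
    reindexAut a b σ f = f ∘ σ.symm := rfl

namespace WreathSym

variable {a b : ℕ}

def toPerm : WreathSym a b →* Equiv.Perm (Fin b × Fin a) where
  toFun w :=
    { toFun := fun x => (w.right x.1, w.left (w.right x.1) x.2)
      invFun := fun x => (w.right⁻¹ x.1, (w.left x.1)⁻¹ x.2)
      left_inv := fun x => by simp
      right_inv := fun x => by simp }
  map_one' := rfl
  map_mul' v w := by
    refine Equiv.ext fun x => Prod.ext rfl ?_
    show (v.left * reindexAut a b v.right w.left) (v.right (w.right x.1)) x.2 = _
    simp [reindexAut_apply]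

lemma toPerm_apply (w : WreathSym a b) (x : Fin b × Fin a) :
    toPerm w x = (w.right x.1, w.left (w.right x.1) x.2) := rfl

lemma toPerm_injective (ha : 0 < a) : Function.Injective (toPerm : WreathSym a b →* _) := by
  rw [injective_iff_map_eq_one]
  intro w hw
  have hfix (x : Fin b × Fin a) : (w.right x.1, w.left (w.right x.1) x.2) = x := by
    rw [← toPerm_apply, hw, Equiv.Perm.one_apply]
  have hright : w.right = 1 := Equiv.ext fun i => congrArg Prod.fst (hfix (i, ⟨0, ha⟩))
  refine SemidirectProduct.ext (funext fun i => Equiv.ext fun p => ?_) hright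
  show w.left i p = p
  simpa [hright] using congrArg Prod.snd (hfix (i, p))

def toGraphAut :
    WreathSym a b →* graphAut ((⊥ : SimpleGraph (Fin b)) □ (⊤ : SimpleGraph (Fin a))) :=
  toPerm.codRestrict _ fun w x y => by
    rw [SimpleGraph.bot_boxProd_top_adj, SimpleGraph.bot_boxProd_top_adj,
      (toPerm w).injective.ne_iff]
    simp [toPerm_apply]

lemma toGraphAut_surjective (ha : 0 < a) :
    Function.Surjective (toGraphAut : WreathSym a b →* _) := by
  rintro ⟨e, he⟩
  obtain ⟨σ, τ, hστ⟩ :=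
    SimpleGraph.exists_eq_prodMap_of_mem_graphAut (⟨0, ha⟩ : Fin a) he
  refine ⟨⟨fun j => τ (σ.symm j), σ⟩, Subtype.ext (Equiv.ext fun x => ?_)⟩
  rw [hστ]
  exact Prod.ext rfl (congrArg (τ · x.2) (σ.symm_apply_apply x.1))

noncomputable def graphAutEquiv (ha : 0 < a) :
    graphAut ((⊥ : SimpleGraph (Fin b)) □ (⊤ : SimpleGraph (Fin a))) ≃* WreathSym a b :=
  (MulEquiv.ofBijective toGraphAut
    ⟨fun _ _ h => toPerm_injective ha (congrArg Subtype.val h), toGraphAut_surjective ha⟩).symm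

end WreathSym

namespace Matrix

variable {R : Type*} [CommRing R]

lemma fin_two_mul_comm_iff {A B : Matrix (Fin 2) (Fin 2) R}
    (hA : A 1 1 = A 0 0) (hB : B 1 1 = B 0 0) :
    A * B = B * A ↔ A 0 1 * B 1 0 = B 0 1 * A 1 0 := by
  rw [← Matrix.ext_iff]
  simp only [Fin.forall_fin_two, mul_apply, Fin.sum_univ_two, hA, hB]
  constructor
  · rintro ⟨⟨h, -⟩, -⟩
    linear_combination h
  · intro h
    exact ⟨⟨by linear_combination h, by ring⟩, by ring, by linear_combination -h⟩

variable [NoZeroDivisors R] [CharP R 2]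

lemma fin_two_diag_eq_of_mul_self_eq_one {A : Matrix (Fin 2) (Fin 2) R} (h : A * A = 1) :
    A 1 1 = A 0 0 := by
  have h00 := congrFun₂ h 0 0
  have h11 := congrFun₂ h 1 1
  simp only [mul_apply, Fin.sum_univ_two, one_apply_eq] at h00 h11
  exact CharTwo.sq_injective (by linear_combination h11 - h00)

namespace SpecialLinearGroup

lemma center_fin_two_eq_bot : Subgroup.center SL(2, R) = ⊥ := by
  refine (Subgroup.eq_bot_iff_forall _).2 fun A hA => ?_
  obtain ⟨r, hr, hrA⟩ := mem_center_iff.1 hA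
  have hr1 : r = 1 := CharTwo.sq_injective (by simpa using hr)
  ext : 1
  simp [← hrA, hr1]

lemma fin_two_ext_of_mul_self_eq_one {x y : SL(2, R)} (hx : x * x = 1) (hy : y * y = 1)
    (h01 : x 0 1 = y 0 1) (h10 : x 1 0 = y 1 0) : x = y := by
  have hx' : (x : Matrix (Fin 2) (Fin 2) R) * x = 1 := by simpa using congrArg Subtype.val hx
  have hy' : (y : Matrix (Fin 2) (Fin 2) R) * y = 1 := by simpa using congrArg Subtype.val hy
  have h00 : x 0 0 = y 0 0 := by
    have ex := congrFun₂ hx' 0 0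
    have ey := congrFun₂ hy' 0 0
    simp only [mul_apply, Fin.sum_univ_two, one_apply_eq] at ex ey
    exact CharTwo.sq_injective (by linear_combination ex - ey - x 0 1 * h10 - y 1 0 * h01)
  ext i j
  fin_cases i <;> fin_cases j
  · exact h00
  · exact h01
  · exact h10
  · simpa [fin_two_diag_eq_of_mul_self_eq_one hx', fin_two_diag_eq_of_mul_self_eq_one hy']
      using h00

lemma mul_comm_iff_of_mul_self_eq_one {x y : SL(2, R)} (hx : x * x = 1) (hy : y * y = 1) :
    x * y = y * x ↔ x 0 1 * y 1 0 = y 0 1 * x 1 0 := by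
  rw [← fin_two_mul_comm_iff
    (fin_two_diag_eq_of_mul_self_eq_one (by simpa using congrArg Subtype.val hx))
    (fin_two_diag_eq_of_mul_self_eq_one (by simpa using congrArg Subtype.val hy)),
    ← coe_mul, ← coe_mul]
  exact ⟨congrArg _, Subtype.ext⟩

section PerfectField

variable {F : Type*} [Field F] [CharP F 2] [PerfectRing F 2]

lemma exists_mul_self_eq_one (v : Fin 2 → F) :
    ∃ x : SL(2, F), x * x = 1 ∧ x 0 1 = v 0 ∧ x 1 0 = v 1 := by
  set s := (frobeniusEquiv F 2).symm (1 + v 0 * v 1)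
  have hs : s ^ 2 = 1 + v 0 * v 1 := by
    rw [← frobeniusEquiv_def]
    exact (frobeniusEquiv F 2).apply_symm_apply _
  have two : (2 : F) = 0 := CharTwo.two_eq_zero
  refine ⟨⟨!![s, v 0; v 1, s], by rw [det_fin_two_of]; linear_combination hs⟩,
    Subtype.ext ?_, rfl, rfl⟩
  show !![s, v 0; v 1, s] * !![s, v 0; v 1, s] = 1
  rw [mul_fin_two, one_fin_two,
    show s * s + v 0 * v 1 = 1 by linear_combination hs + v 0 * v 1 * two,
    show s * v 0 + v 0 * s = 0 by linear_combination s * v 0 * two,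
    show v 1 * s + s * v 1 = 0 by linear_combination s * v 1 * two,
    show v 1 * v 0 + s * s = 1 by linear_combination hs + v 0 * v 1 * two]

noncomputable def involutionOffDiagEquiv :
    {x : SL(2, F) // x * x = 1 ∧ x ≠ 1} ≃ {v : Fin 2 → F // v ≠ 0} :=
  Equiv.ofBijective
    (fun x => ⟨![x.1 0 1, x.1 1 0], fun h => x.2.2 <| fin_two_ext_of_mul_self_eq_one x.2.1
      (mul_one 1) (by simpa using congrFun h 0) (by simpa using congrFun h 1)⟩)
    ⟨fun x y h => Subtype.ext <| fin_two_ext_of_mul_self_eq_one x.2.1 y.2.1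
      (by simpa using congrFun (congrArg Subtype.val h) 0)
      (by simpa using congrFun (congrArg Subtype.val h) 1),
    fun v => by
      obtain ⟨x, hx, h01, h10⟩ := exists_mul_self_eq_one v.1
      refine ⟨⟨x, hx, ?_⟩, Subtype.ext (funext fun i => by fin_cases i <;> simp [h01, h10])⟩
      rintro rfl
      exact v.2 (funext fun i => by fin_cases i <;> simp [← h01, ← h10])⟩

lemma involutionOffDiagEquiv_apply (x : {x : SL(2, F) // x * x = 1 ∧ x ≠ 1}) :
    (involutionOffDiagEquiv x : Fin 2 → F) = ![x.1 0 1, x.1 1 0] := rfl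

end PerfectField

end SpecialLinearGroup

end Matrix

lemma Projectivization.nonZeroEquivProjectivizationProdUnits_apply_fst (K V : Type*)
    [DivisionRing K] [AddCommGroup V] [Module K V] (v : {v : V // v ≠ 0}) :
    (nonZeroEquivProjectivizationProdUnits K V v).1 = mk K v.1 v.2 := rfl

lemma Projectivization.mk_eq_mk_iff_mul_eq_mul {K : Type*} [Field K] {v w : Fin 2 → K}
    (hv : v ≠ 0) (hw : w ≠ 0) : mk K v hv = mk K w hw ↔ v 0 * w 1 = w 0 * v 1 := by
  rw [mk_eq_mk_iff']
  constructor
  · rintro ⟨a, rfl⟩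
    simp only [Pi.smul_apply, smul_eq_mul]
    ring
  · intro h
    by_cases hw0 : w 0 = 0
    · have hw1 : w 1 ≠ 0 := fun hw1 => hw (funext (Fin.forall_fin_two.2 ⟨hw0, hw1⟩))
      have hv0 : v 0 = 0 := by simpa [hw0, hw1] using h
      refine ⟨v 1 / w 1, funext (Fin.forall_fin_two.2 ⟨?_, ?_⟩)⟩ <;> simp [hw0, hv0, hw1]
    · refine ⟨v 0 / w 0, funext (Fin.forall_fin_two.2 ⟨?_, ?_⟩)⟩
      · simp [hw0]
      · simp only [Pi.smul_apply, smul_eq_mul]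
        field_simp
        linear_combination h

open Matrix.SpecialLinearGroup in
noncomputable def commGraphSLTwoIso (F : Type*) [Field F] [CharP F 2] [PerfectRing F 2] :
    commGraph SL(2, F) ≃g
      ((⊥ : SimpleGraph (ℙ F (Fin 2 → F))) □ (⊤ : SimpleGraph Fˣ)) :=
  SimpleGraph.Iso.toBotBoxProdTop
    (involutionOffDiagEquiv.trans (Projectivization.nonZeroEquivProjectivizationProdUnits F _))
    fun x y => by
      rw [Equiv.trans_apply, Equiv.trans_apply,
        Projectivization.nonZeroEquivProjectivizationProdUnits_apply_fst,
        Projectivization.nonZeroEquivProjectivizationProdUnits_apply_fst,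
        Projectivization.mk_eq_mk_iff_mul_eq_mul, involutionOffDiagEquiv_apply,
        involutionOffDiagEquiv_apply]
      exact and_congr_right' (mul_comm_iff_of_mul_self_eq_one x.2.1 y.2.1)

lemma FiniteField.charP_two_of_card_eq_two_pow {F : Type*} [Field F] [Fintype F] {n : ℕ}
    (h : Fintype.card F = 2 ^ n) : CharP F 2 := by
  have h2 : (2 : F) ^ n = 0 := by exact_mod_cast h ▸ FiniteField.cast_card_eq_zero F
  exact CharTwo.of_one_ne_zero_of_two_eq_zero one_ne_zero (eq_zero_of_pow_eq_zero h2)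

theorem stmt_1_general (q : ℕ) (hq2 : ∃ n : ℕ, q = 2 ^ n)
    (F : Type) [Field F] [Fintype F] (hF : Fintype.card F = q) :
    Nonempty ((graphAut (commGraph (PSL(2, F)))) ≃* WreathSym (q - 1) (q + 1)) := by
  obtain ⟨n, hn⟩ := hq2
  have := FiniteField.charP_two_of_card_eq_two_pow (hF.trans hn)
  have hP : Nat.card (ℙ F (Fin 2 → F)) = q + 1 := by
    rw [Projectivization.card_of_finrank_two F _ (Module.finrank_fin_fun F),
      Nat.card_eq_fintype_card, hF]
  have hU : Nat.card Fˣ = q - 1 := by rw [Nat.card_units, Nat.card_eq_fintype_card, hF]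
  have hq : 0 < q - 1 := hF ▸ Nat.sub_pos_of_lt Fintype.one_lt_card
  let graphIso : commGraph PSL(2, F) ≃g
      ((⊥ : SimpleGraph (Fin (q + 1))) □ (⊤ : SimpleGraph (Fin (q - 1)))) :=
    (commGraphCongr ((QuotientGroup.quotientMulEquivOfEq
      Matrix.SpecialLinearGroup.center_fin_two_eq_bot).trans QuotientGroup.quotientBot)).trans
      ((commGraphSLTwoIso F).trans (SimpleGraph.Iso.botBoxProdTopCongr
        (Finite.equivFinOfCardEq hP) (Finite.equivFinOfCardEq hU)))
  exact ⟨(graphAutCongr graphIso).trans (WreathSym.graphAutEquiv hq)⟩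

/-- For `q > 3` a power of `2` and `L = PSL(2,q)` with `X` its class of involutions, the
automorphism group of the commuting involution graph `C(L,X)` is isomorphic to the wreath
product `Sym(q-1) ≀ Sym(q+1)`. -/
theorem stmt_1 (q : ℕ) (hq2 : ∃ n : ℕ, q = 2 ^ n) (hq3 : 3 < q)
    (F : Type) [Field F] [Fintype F] (hF : Fintype.card F = q) :
    Nonempty ((graphAut (commGraph (PSL(2, F)))) ≃* WreathSym (q - 1) (q + 1)) :=
  stmt_1_general q hq2 F hF
end

section
/- Let q ≡ 3 (mod 4), q > 3, be a prime power, and let t ∈ PSL(2,q) be the involution represented by the matrix [[0,1],[-1,0]] over GF(q). Then the set of neighbours of t in the commuting involution graph, Δ_1(t), equals the set of elements of PSL(2,q) represented by matrices [[σ,τ],[τ,-σ]] with σ² + τ² = -1. -/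
/-!
Two elements of `PSL(2, F)` commute iff their lifts to `SL(2, F)` commute or anticommute. A lift
anticommuting with `t = [[0, 1], [-1, 0]]` has the shape `[[σ, τ], [τ, -σ]]`, and its determinant
is `-(σ² + τ²) = 1`; as `2 ≠ 0` (`q` is odd), such an element is never `±t`. A lift commuting
with `t` has the shape `a + b t` with `a² + b² = 1`; if it squares to `±1` then `2ab = 0`, so it
is `±1` or `±t`, and its image is not an involution other than `t`.
-/

open Matrix
open scoped MatrixGroups

namespace Matrix.SpecialLinearGroup

section CommRing

variable {R : Type*} [CommRing R]

theorem coe_inj {n : Type*} [DecidableEq n] [Fintype n] {A B : SpecialLinearGroup n R} :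
    (A : Matrix n n R) = B ↔ A = B :=
  Subtype.coe_injective.eq_iff

theorem exists_eq_fin_two (g : SL(2, R)) :
    ∃ a b c d : R, a * d - b * c = 1 ∧ (g : Matrix (Fin 2) (Fin 2) R) = !![a, b; c, d] :=
  ⟨_, _, _, _, by rw [← det_fin_two, g.det_coe], eta_fin_two _⟩

theorem commute_fin_two_iff (a b c d : R) :
    !![0, 1; -1, 0] * !![a, b; c, d] = !![a, b; c, d] * !![0, 1; -1, 0] ↔ c = -b ∧ d = a := by
  simp +contextual

theorem anticommute_fin_two_iff (a b c d : R) :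
    !![0, 1; -1, 0] * !![a, b; c, d] = -(!![a, b; c, d] * !![0, 1; -1, 0]) ↔
      c = b ∧ d = -a := by
  simp +contextual

theorem mul_eq_neg_mul_iff_exists {t n : SL(2, R)}
    (ht : (t : Matrix (Fin 2) (Fin 2) R) = !![0, 1; -1, 0]) :
    t * n = -(n * t) ↔
      ∃ σ τ : R, σ ^ 2 + τ ^ 2 = -1 ∧ (n : Matrix (Fin 2) (Fin 2) R) = !![σ, τ; τ, -σ] := by
  obtain ⟨a, b, c, d, hdet, hn⟩ := exists_eq_fin_two n
  rw [← coe_inj, coe_neg, coe_mul, coe_mul, ht, hn, anticommute_fin_two_iff]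
  constructor
  · rintro ⟨hc, hd⟩
    subst c d
    exact ⟨a, b, by linear_combination -hdet, rfl⟩
  · rintro ⟨σ, τ, -, h⟩
    simp only [EmbeddingLike.apply_eq_iff_eq, vecCons_inj, and_true] at h
    obtain ⟨⟨rfl, rfl⟩, rfl, rfl⟩ := h
    exact ⟨rfl, rfl⟩

end CommRing

section IsDomain

variable {R : Type*} [CommRing R] [IsDomain R]

theorem mem_center_iff_eq_one_or_eq_neg_one {g : SL(2, R)} :
    g ∈ Subgroup.center SL(2, R) ↔ g = 1 ∨ g = -1 := by
  rw [mem_center_iff]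
  constructor
  · rintro ⟨r, hr, hg⟩
    rcases sq_eq_one_iff.mp hr with rfl | rfl
    · left; ext : 1; rw [← hg, map_one, coe_one]
    · right; ext : 1; rw [← hg, map_neg, map_one, coe_neg, coe_one]
  · rintro (rfl | rfl)
    · exact ⟨1, one_pow _, by simp⟩
    · exact ⟨-1, by simp, by rw [map_neg, map_one, coe_neg, coe_one]⟩

theorem coe_PSL_eq_coe_iff {a b : SL(2, R)} : (a : PSL(2, R)) = b ↔ a = b ∨ a = -b := by
  rw [QuotientGroup.eq, mem_center_iff_eq_one_or_eq_neg_one, inv_mul_eq_one,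
    inv_mul_eq_iff_eq_mul, mul_neg_one, eq_comm (a := b), neg_eq_iff_eq_neg]

theorem commute_coe_PSL_iff {a b : SL(2, R)} :
    Commute (a : PSL(2, R)) b ↔ a * b = b * a ∨ a * b = -(b * a) := by
  rw [Commute, SemiconjBy, ← QuotientGroup.mk_mul, ← QuotientGroup.mk_mul, coe_PSL_eq_coe_iff]

theorem mul_eq_neg_mul_of_coe_PSL_eq {t m n : SL(2, R)} (hnm : (n : PSL(2, R)) = m)
    (hm : t * m = -(m * t)) : t * n = -(n * t) := by
  rcases coe_PSL_eq_coe_iff.mp hnm with rfl | rfl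
  · exact hm
  · rw [mul_neg, neg_mul, neg_neg]
    exact neg_eq_iff_eq_neg.mpr hm

end IsDomain

section Field

variable {F : Type*} [Field F]

theorem neg_ne_self (h2 : (2 : F) ≠ 0) (g : SL(2, F)) : -g ≠ g := by
  intro h
  have h1 : (-1 : SL(2, F)) = 1 := mul_right_cancel (b := g) (by rw [neg_one_mul, one_mul, h])
  have := congrArg (fun g : SL(2, F) => g 0 0) h1
  simp only [coe_neg, coe_one, neg_apply, one_apply_eq] at this
  exact h2 (by linear_combination -this)

theorem coe_PSL_ne_of_mul_eq_neg_mul (h2 : (2 : F) ≠ 0) {a b : SL(2, F)}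
    (hab : a * b = -(b * a)) : (a : PSL(2, F)) ≠ b := by
  intro h
  rcases coe_PSL_eq_coe_iff.mp h with rfl | rfl
  · exact neg_ne_self h2 _ hab.symm
  · rw [neg_mul, mul_neg, neg_neg] at hab
    exact neg_ne_self h2 _ hab

theorem coe_PSL_eq_one_or_eq_of_commute (h2 : (2 : F) ≠ 0) {t n : SL(2, F)}
    (ht : (t : Matrix (Fin 2) (Fin 2) F) = !![0, 1; -1, 0]) (hcomm : t * n = n * t)
    (hsq : (n : PSL(2, F)) * n = 1) : (n : PSL(2, F)) = 1 ∨ (n : PSL(2, F)) = t := by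
  obtain ⟨a, b, c, d, hdet, hn⟩ := exists_eq_fin_two n
  rw [← coe_inj, coe_mul, coe_mul, ht, hn, commute_fin_two_iff] at hcomm
  obtain ⟨hc, hd⟩ := hcomm
  subst c d
  rw [← QuotientGroup.mk_mul, ← QuotientGroup.mk_one, coe_PSL_eq_coe_iff] at hsq
  -- `n = a • 1 + b • t`, so the off-diagonal entry of `n * n = ±1` is `2ab`.
  have hab : a * b = 0 := by
    have h01 : 2 * (a * b) = (n * n) 0 1 := by
      rw [coe_mul, hn, mul_fin_two]
      simp only [of_apply, cons_val', cons_val_zero, cons_val_one, empty_val', cons_val_fin_one]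
      ring
    have h01' : (n * n) 0 1 = 0 := by rcases hsq with h | h <;> simp [h]
    exact (mul_eq_zero.mp (h01.trans h01')).resolve_left h2
  rw [← QuotientGroup.mk_one, coe_PSL_eq_coe_iff, coe_PSL_eq_coe_iff]
  rcases mul_eq_zero.mp hab with rfl | rfl
  · right
    obtain rfl | rfl : b = 1 ∨ b = -1 := mul_self_eq_one_iff.mp (by linear_combination hdet)
    · exact Or.inl (Subtype.ext (by rw [hn, ht]))
    · exact Or.inr (Subtype.ext (by simp [hn, ht]))
  · left
    obtain rfl | rfl : a = 1 ∨ a = -1 := mul_self_eq_one_iff.mp (by linear_combination hdet)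
    · exact Or.inl (Subtype.ext (by simp [hn, one_fin_two]))
    · exact Or.inr (Subtype.ext (by simp [hn, one_fin_two]))

theorem coe_PSL_ne_and_commute_iff (h2 : (2 : F) ≠ 0) {t n : SL(2, F)}
    (ht : (t : Matrix (Fin 2) (Fin 2) F) = !![0, 1; -1, 0])
    (hn : (n : PSL(2, F)) * n = 1 ∧ (n : PSL(2, F)) ≠ 1) :
    ((t : PSL(2, F)) ≠ n ∧ Commute (t : PSL(2, F)) n) ↔ t * n = -(n * t) := by
  refine ⟨fun ⟨hne, hcomm⟩ => ?_, fun h => ⟨coe_PSL_ne_of_mul_eq_neg_mul h2 h,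
    commute_coe_PSL_iff.mpr (Or.inr h)⟩⟩
  refine (commute_coe_PSL_iff.mp hcomm).resolve_left fun h => ?_
  rcases coe_PSL_eq_one_or_eq_of_commute h2 ht h hn.1 with h1 | h1
  exacts [hn.2 h1, hne h1.symm]

end Field

end Matrix.SpecialLinearGroup

theorem stmt_7_general (q : ℕ) (hq1 : q % 4 = 3)
    (F : Type) [Field F] [Fintype F] (hF : Fintype.card F = q)
    (t : SpecialLinearGroup (Fin 2) F) (htm : (t : Matrix (Fin 2) (Fin 2) F) = !![0, 1; -1, 0])
    (ht : ((t : PSL(2, F)) * (t : PSL(2, F)) = 1 ∧ (t : PSL(2, F)) ≠ 1)) :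
    (commGraph (PSL(2, F))).neighborSet ⟨(t : PSL(2, F)), ht⟩ =
      {y : {x : PSL(2, F) // x * x = 1 ∧ x ≠ 1} | ∃ σ τ : F, σ ^ 2 + τ ^ 2 = -1 ∧
        ∃ m : SpecialLinearGroup (Fin 2) F,
          (m : Matrix (Fin 2) (Fin 2) F) = !![σ, τ; τ, -σ] ∧ (y : PSL(2, F)) = (m : PSL(2, F))} := by
  have h2 : (2 : F) ≠ 0 := Ring.two_ne_zero fun h => by
    have := FiniteField.even_card_iff_char_two.mp h
    omega
  ext ⟨y, hy⟩
  obtain ⟨n, rfl⟩ := QuotientGroup.mk_surjective y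
  change (_ ≠ _ ∧ _) ↔ _
  rw [ne_eq, Subtype.mk.injEq, ← ne_eq]
  refine (SpecialLinearGroup.coe_PSL_ne_and_commute_iff h2 htm hy).trans ⟨fun h => ?_, ?_⟩
  · obtain ⟨σ, τ, hστ, hn⟩ := (SpecialLinearGroup.mul_eq_neg_mul_iff_exists htm).mp h
    exact ⟨σ, τ, hστ, n, hn, rfl⟩
  · rintro ⟨σ, τ, hστ, m, hm, hnm⟩
    exact SpecialLinearGroup.mul_eq_neg_mul_of_coe_PSL_eq hnm
      ((SpecialLinearGroup.mul_eq_neg_mul_iff_exists htm).mpr ⟨σ, τ, hστ, hm⟩)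

/-- For `q ≡ 3 (mod 4)`, `q > 3`, and `t ∈ PSL(2,q)` represented by `[[0,1],[-1,0]]`, the
neighbourhood `Δ₁(t)` of `t` in the commuting involution graph consists exactly of the
elements represented by matrices `[[σ,τ],[τ,-σ]]` with `σ² + τ² = -1`. -/
theorem stmt_7 (q : ℕ) (hq1 : q % 4 = 3) (hq3 : 3 < q)
    (F : Type) [Field F] [Fintype F] (hF : Fintype.card F = q)
    (t : SpecialLinearGroup (Fin 2) F) (htm : (t : Matrix (Fin 2) (Fin 2) F) = !![0, 1; -1, 0])
    (ht : ((t : PSL(2, F)) * (t : PSL(2, F)) = 1 ∧ (t : PSL(2, F)) ≠ 1)) :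
    (commGraph (PSL(2, F))).neighborSet ⟨(t : PSL(2, F)), ht⟩ =
      {y : {x : PSL(2, F) // x * x = 1 ∧ x ≠ 1} | ∃ σ τ : F, σ ^ 2 + τ ^ 2 = -1 ∧
        ∃ m : SpecialLinearGroup (Fin 2) F,
          (m : Matrix (Fin 2) (Fin 2) F) = !![σ, τ; τ, -σ] ∧ (y : PSL(2, F)) = (m : PSL(2, F))} :=
  stmt_7_general q hq1 F hF t htm ht
end
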